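/- Let d ≥ 2 be an even integer and fix t ∈ (0, 1/4). Then there exist an integer m and unit vectors w₁*, …, w_m* ∈ ℝ^d such that t ≤ θ(w_i*, w_j*) ≤ 6.5·t for all i ≠ j, and m ≥ 2^{d/16}. -/

import Mathlib

open Finset Real InnerProductGeometry
open scoped RealInnerProductSpace

/-!
Let `k = d - 1`. A maximal binary code `C ⊆ {0,1}^k` whose pairwise Hamming distances lie in
`[k/4, 3k/4]` is large: every word lies within distance `k/4` of some codeword or of its
complement, and each such ball has at most `4^k / 3^(3k/4)` points (Markov's inequality for the
weight `3^(d_H(x, c))`, whose sum over all `x` is `4^k`). Hence `#C ≥ 3^(3k/4) / 2^(k+1)`, which is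
at least `2^(d/16)` once `k ≥ 9`.

A word `x` becomes the unit vector `(√(1 - kρ), ±√ρ, …, ±√ρ)` with signs read off `x`, so that
`⟪v_x, v_y⟫ = 1 - 2ρ d_H(x, y)`. With `ρ = 2(1 - cos t)/k` the distances in `[k/4, 3k/4]` give
inner products in `[1 - 3(1 - cos t), cos t] ⊆ [cos 6.5t, cos t]`. In dimension `d ≤ 16` two unit
vectors at angle exactly `t` already suffice.
-/

theorem Finset.exists_pairwise_not_rel_forall_exists_rel {α : Type*} [Fintype α]
    {r : α → α → Prop} (hrefl : ∀ x, r x x) (hsymm : ∀ x y, r x y → r y x) :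
    ∃ C : Finset α, (C : Set α).Pairwise (fun x y => ¬ r x y) ∧ ∀ x, ∃ c ∈ C, r x c := by
  classical
  obtain ⟨C, hC, hmax⟩ := (univ.filter fun C : Finset α =>
    (C : Set α).Pairwise fun x y => ¬ r x y).exists_max_image card ⟨∅, by simp⟩
  rw [mem_filter] at hC
  refine ⟨C, hC.2, fun x => ?_⟩
  by_contra! hx
  have hxC : x ∉ C := fun h => hx x h (hrefl x)
  have hins : ((insert x C : Finset α) : Set α).Pairwise fun x y => ¬ r x y := by
    rw [coe_insert]
    exact hC.2.insert fun c hc _ => ⟨hx c hc, fun h => hx c hc (hsymm _ _ h)⟩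
  have := hmax _ (mem_filter.2 ⟨mem_univ _, hins⟩)
  rw [card_insert_of_notMem hxC] at this
  omega

section Hamming

variable {ι : Type*} [Fintype ι]

theorem sum_pow_hammingDist [DecidableEq ι] {R : Type*} [CommSemiring R] (a : R) (c : ι → Bool) :
    ∑ x : ι → Bool, a ^ hammingDist x c = (a + 1) ^ Fintype.card ι := by
  have hprod (x : ι → Bool) : a ^ hammingDist x c = ∏ j, a ^ (if x j ≠ c j then 1 else 0) := by
    rw [prod_pow_eq_pow_sum, sum_boole, Nat.cast_id]
    rfl
  simp_rw [hprod]
  rw [← Fintype.piFinset_univ,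
    ← prod_univ_sum (fun _ => univ) fun j (b : Bool) => a ^ if b ≠ c j then 1 else 0]
  have hfactor (j : ι) : ∑ b : Bool, a ^ (if b ≠ c j then 1 else 0) = a + 1 := by
    cases c j <;> simp [add_comm]
  simp only [hfactor, prod_const, card_univ]

theorem card_le_hammingDist_mul_pow_le [DecidableEq ι] (c : ι → Bool) (n : ℕ) :
    #{x | n ≤ hammingDist x c} * 3 ^ n ≤ 4 ^ Fintype.card ι := by
  calc #{x | n ≤ hammingDist x c} * 3 ^ n
      ≤ ∑ x ∈ {x | n ≤ hammingDist x c}, 3 ^ hammingDist x c := by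
        rw [← smul_eq_mul]
        exact card_nsmul_le_sum _ _ _ fun x hx =>
          Nat.pow_le_pow_right (by norm_num) (mem_filter.1 hx).2
    _ ≤ ∑ x, 3 ^ hammingDist x c := sum_le_sum_of_subset (subset_univ _)
    _ = 4 ^ Fintype.card ι := sum_pow_hammingDist 3 c

theorem hammingDist_add_hammingDist_not (x c : ι → Bool) :
    hammingDist x c + hammingDist x (fun j => !c j) = Fintype.card ι := by
  rw [hammingDist, hammingDist, ← card_univ,
    ← card_filter_add_card_filter_not (s := univ) fun j => x j ≠ c j]
  congr 2
  ext j
  cases x j <;> cases c j <;> simp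

end Hamming

theorem card_hammingDist_not_mem_quarters_mul_pow_le {k : ℕ} (c : Fin k → Bool) :
    #{x | 4 * hammingDist x c < k ∨ 3 * k < 4 * hammingDist x c} * 3 ^ ((3 * k + 3) / 4)
      ≤ 2 * 4 ^ k := by
  set n := (3 * k + 3) / 4
  have hsub : ({x | 4 * hammingDist x c < k ∨ 3 * k < 4 * hammingDist x c} : Finset _)
      ⊆ univ.filter (fun x => n ≤ hammingDist x fun j => !c j) ∪
          univ.filter (fun x => n ≤ hammingDist x c) := by
    intro x hx
    have hsum := hammingDist_add_hammingDist_not x c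
    rw [Fintype.card_fin] at hsum
    simp only [mem_filter, mem_univ, true_and, mem_union] at hx ⊢
    omega
  have hnot := card_le_hammingDist_mul_pow_le (fun j => !c j) n
  have hc := card_le_hammingDist_mul_pow_le c n
  rw [Fintype.card_fin] at hnot hc
  calc _ ≤ (#{x | n ≤ hammingDist x (fun j => !c j)} + #{x | n ≤ hammingDist x c}) * 3 ^ n :=
        Nat.mul_le_mul_right _ ((card_le_card hsub).trans (card_union_le _ _))
    _ ≤ 2 * 4 ^ k := by rw [add_mul]; omega

theorem exists_binary_code_hammingDist_mem_quarters {k : ℕ} (hk : 0 < k) :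
    ∃ C : Finset (Fin k → Bool),
      (C : Set (Fin k → Bool)).Pairwise
        (fun x y => k ≤ 4 * hammingDist x y ∧ 4 * hammingDist x y ≤ 3 * k) ∧
      3 ^ (3 * k) ≤ (#C * 2 ^ (k + 1)) ^ 4 := by
  set n := (3 * k + 3) / 4
  let far (x c : Fin k → Bool) : Prop := 4 * hammingDist x c < k ∨ 3 * k < 4 * hammingDist x c
  obtain ⟨C, hC, hcover⟩ := exists_pairwise_not_rel_forall_exists_rel (r := far)
    (fun x => by simp [far, hk]) (fun x y => by simp only [far, hammingDist_comm x y]; exact id)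
  refine ⟨C, hC.imp fun x y h => by simp only [far] at h; omega, ?_⟩
  have hcard : 2 ^ k * 3 ^ n ≤ 2 ^ k * (#C * 2 ^ (k + 1)) := by
    have hunion : (univ : Finset (Fin k → Bool)) ⊆ C.biUnion fun c => {x | far x c} := by
      intro x _
      obtain ⟨c, hc, hxc⟩ := hcover x
      exact mem_biUnion.2 ⟨c, hc, mem_filter.2 ⟨mem_univ _, hxc⟩⟩
    calc 2 ^ k * 3 ^ n = #(univ : Finset (Fin k → Bool)) * 3 ^ n := by simp
      _ ≤ (∑ c ∈ C, #{x | far x c}) * 3 ^ n :=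
        Nat.mul_le_mul_right _ ((card_le_card hunion).trans card_biUnion_le)
      _ ≤ ∑ c ∈ C, 2 * 4 ^ k := by
        rw [sum_mul]
        exact sum_le_sum fun c _ => card_hammingDist_not_mem_quarters_mul_pow_le c
      _ = 2 ^ k * (#C * 2 ^ (k + 1)) := by
        rw [sum_const, smul_eq_mul, show (4 : ℕ) = 2 ^ 2 by rfl, ← pow_mul]; ring
  calc 3 ^ (3 * k) ≤ 3 ^ (4 * n) := Nat.pow_le_pow_right (by norm_num) (by omega)
    _ = (3 ^ n) ^ 4 := by ring
    _ ≤ (#C * 2 ^ (k + 1)) ^ 4 :=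
      Nat.pow_le_pow_left (Nat.le_of_mul_le_mul_left hcard (by positivity)) 4

theorem Real.arccos_mem_Icc_of_cos_le {a b x : ℝ} (ha : 0 ≤ a) (hab : a ≤ b) (hb : b ≤ π)
    (hlo : cos b ≤ x) (hhi : x ≤ cos a) : arccos x ∈ Set.Icc a b :=
  ⟨by simpa [arccos_cos ha (hab.trans hb)] using arccos_le_arccos hhi,
    by simpa [arccos_cos (ha.trans hab) hb] using arccos_le_arccos hlo⟩

theorem Real.cos_six_point_five_mul_le {t : ℝ} (ht : |6.5 * t| ≤ π) :
    cos (6.5 * t) ≤ 1 - 3 * (1 - cos t) := by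
  have hpi : 1 / 8 ≤ 2 / π ^ 2 := by
    rw [div_le_div_iff₀ (by norm_num) (by positivity)]
    nlinarith [pi_pos, pi_le_four]
  nlinarith [cos_le_one_sub_mul_cos_sq ht, one_sub_sq_div_two_le_cos (x := t), sq_nonneg t]

theorem Real.rpow_div_le_of_pow_le_pow {x y : ℝ} (hx : 0 ≤ x) (hy : 0 ≤ y) {d n : ℕ} (hn : n ≠ 0)
    (h : x ^ d ≤ y ^ n) : x ^ ((d : ℝ) / n) ≤ y := by
  rwa [← pow_le_pow_iff_left₀ (rpow_nonneg hx _) hy hn, ← rpow_natCast (x ^ _), ← rpow_mul hx,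
    div_mul_cancel₀ _ (Nat.cast_ne_zero.2 hn), rpow_natCast]

theorem two_pow_le_pow_sixteen_of_three_pow_le {k m : ℕ} (hk : 9 ≤ k)
    (h : 3 ^ (3 * k) ≤ (m * 2 ^ (k + 1)) ^ 4) : 2 ^ (k + 1) ≤ m ^ 16 := by
  refine Nat.le_of_mul_le_mul_right (c := (2 ^ (k + 1)) ^ 16) ?_ (by positivity)
  calc 2 ^ (k + 1) * (2 ^ (k + 1)) ^ 16 = 2 ^ (17 * k + 17) := by ring
    _ ≤ 2 ^ (19 * k) := Nat.pow_le_pow_right (by norm_num) (by omega)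
    _ = (2 ^ 19) ^ k := pow_mul 2 19 k
    _ ≤ (3 ^ 12) ^ k := Nat.pow_le_pow_left (by norm_num) k
    _ = (3 ^ (3 * k)) ^ 4 := by rw [← pow_mul, ← pow_mul]; ring_nf
    _ ≤ ((m * 2 ^ (k + 1)) ^ 4) ^ 4 := Nat.pow_le_pow_left h 4
    _ = m ^ 16 * (2 ^ (k + 1)) ^ 16 := by ring

noncomputable def capPoint (k : ℕ) (ρ : ℝ) (x : Fin k → Bool) : EuclideanSpace ℝ (Fin (k + 1)) :=
  WithLp.toLp 2 (Fin.cons √(1 - k * ρ) fun j => √ρ * if x j then 1 else -1)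

section capPoint

variable {k : ℕ} {ρ : ℝ}

theorem inner_capPoint (hρ : 0 ≤ ρ) (hkρ : k * ρ ≤ 1) (x y : Fin k → Bool) :
    ⟪capPoint k ρ x, capPoint k ρ y⟫ = 1 - 2 * ρ * hammingDist x y := by
  have hterm (j : Fin k) : (√ρ * if y j then 1 else -1) * (√ρ * if x j then 1 else -1)
      = ρ - 2 * ρ * if x j ≠ y j then 1 else 0 := by
    rw [mul_mul_mul_comm, mul_self_sqrt hρ]
    cases x j <;> cases y j <;> norm_num <;> ring
  simp only [capPoint, PiLp.inner_apply, RCLike.inner_apply, conj_trivial, Fin.sum_univ_succ,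
    Fin.cons_zero, Fin.cons_succ, hterm, mul_self_sqrt (sub_nonneg.2 hkρ), sum_sub_distrib,
    ← mul_sum, sum_boole, sum_const, card_univ, Fintype.card_fin, nsmul_eq_mul]
  rw [hammingDist]
  ring

theorem norm_capPoint (hρ : 0 ≤ ρ) (hkρ : k * ρ ≤ 1) (x : Fin k → Bool) :
    ‖capPoint k ρ x‖ = 1 := by
  have h := inner_capPoint hρ hkρ x x
  rw [hammingDist_self, Nat.cast_zero, mul_zero, sub_zero, real_inner_self_eq_norm_sq] at h
  exact (pow_eq_one_iff_of_nonneg (norm_nonneg _) two_ne_zero).1 h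

theorem angle_capPoint (hρ : 0 ≤ ρ) (hkρ : k * ρ ≤ 1) (x y : Fin k → Bool) :
    angle (capPoint k ρ x) (capPoint k ρ y) = arccos (1 - 2 * ρ * hammingDist x y) := by
  rw [angle, norm_capPoint hρ hkρ, norm_capPoint hρ hkρ, inner_capPoint hρ hkρ, mul_one, div_one]

end capPoint

theorem exists_unit_vectors_angle_eq {d : ℕ} (hd : 2 ≤ d) {t : ℝ} (ht₀ : 0 ≤ t) (htπ : t ≤ π) :
    ∃ u v : EuclideanSpace ℝ (Fin d), ‖u‖ = 1 ∧ ‖v‖ = 1 ∧ angle u v = t := by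
  obtain ⟨k, rfl⟩ : ∃ k, d = k + 1 := ⟨d - 1, by omega⟩
  have hk : (0 : ℝ) < k := by exact_mod_cast (by omega : 0 < k)
  have hρ : 0 ≤ (1 - cos t) / (2 * k) := div_nonneg (sub_nonneg.2 (cos_le_one t)) (by positivity)
  have hkρ : k * ((1 - cos t) / (2 * k)) ≤ 1 := by
    rw [mul_div_assoc', div_le_one (by positivity)]
    nlinarith [neg_one_le_cos t]
  have hdist : hammingDist (fun _ => true : Fin k → Bool) (fun _ => false) = k := by
    simp [hammingDist]
  refine ⟨_, _, norm_capPoint hρ hkρ (fun _ => true), norm_capPoint hρ hkρ (fun _ => false), ?_⟩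
  rw [angle_capPoint hρ hkρ, hdist]
  field_simp
  rw [sub_sub_cancel, arccos_cos ht₀ htπ]

theorem exists_unit_vectors_angle_mem_Icc_of_code {k : ℕ} (C : Finset (Fin k → Bool)) {ρ a b : ℝ}
    (hρ : 0 ≤ ρ) (hkρ : k * ρ ≤ 1) (ha : 0 ≤ a) (hab : a ≤ b) (hb : b ≤ π)
    (hC : (C : Set (Fin k → Bool)).Pairwise fun x y =>
      cos b ≤ 1 - 2 * ρ * hammingDist x y ∧ 1 - 2 * ρ * hammingDist x y ≤ cos a) :
    ∃ w : Fin #C → EuclideanSpace ℝ (Fin (k + 1)),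
      (∀ i, ‖w i‖ = 1) ∧ ∀ i j, i ≠ j → angle (w i) (w j) ∈ Set.Icc a b := by
  refine ⟨fun i => capPoint k ρ (C.equivFin.symm i), fun i => norm_capPoint hρ hkρ _,
    fun i j hij => ?_⟩
  have hne : (C.equivFin.symm i : Fin k → Bool) ≠ C.equivFin.symm j :=
    fun h => hij (C.equivFin.symm.injective (Subtype.ext h))
  obtain ⟨hlo, hhi⟩ := hC (C.equivFin.symm i).2 (C.equivFin.symm j).2 hne
  rw [angle_capPoint hρ hkρ]
  exact arccos_mem_Icc_of_cos_le ha hab hb hlo hhi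

theorem exists_unit_vectors_angle_mem_Icc_of_nine_le {k : ℕ} (hk : 9 ≤ k) {t : ℝ} (ht : 0 ≤ t)
    (h6t : 6.5 * t ≤ π) :
    ∃ (m : ℕ) (w : Fin m → EuclideanSpace ℝ (Fin (k + 1))), (∀ i, ‖w i‖ = 1) ∧
      (∀ i j, i ≠ j → angle (w i) (w j) ∈ Set.Icc t (6.5 * t)) ∧ 2 ^ (k + 1) ≤ m ^ 16 := by
  have hk' : (0 : ℝ) < k := by exact_mod_cast (by omega : 0 < k)
  have hq₀ : 0 ≤ 1 - cos t := sub_nonneg.2 (cos_le_one t)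
  have hq₁ : 2 * (1 - cos t) ≤ 1 := by
    nlinarith [one_sub_sq_div_two_le_cos (x := t), pi_le_four]
  have hcos := cos_six_point_five_mul_le (abs_le.2 ⟨by linarith, h6t⟩)
  obtain ⟨C, hC, hcard⟩ := exists_binary_code_hammingDist_mem_quarters (by omega : 0 < k)
  have hCcos : (C : Set (Fin k → Bool)).Pairwise fun x y =>
      cos (6.5 * t) ≤ 1 - 2 * (2 * (1 - cos t) / k) * hammingDist x y ∧
        1 - 2 * (2 * (1 - cos t) / k) * hammingDist x y ≤ cos t := by
    refine hC.imp fun x y hxy => ?_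
    have hlo : 1 ≤ 4 * (hammingDist x y : ℝ) / k := by
      rw [le_div_iff₀ hk', one_mul]; exact_mod_cast hxy.1
    have hhi : 4 * (hammingDist x y : ℝ) / k ≤ 3 := by
      rw [div_le_iff₀ hk']; exact_mod_cast hxy.2
    rw [show 2 * (2 * (1 - cos t) / k) * hammingDist x y
        = (1 - cos t) * (4 * hammingDist x y / k) by ring]
    constructor <;> nlinarith
  obtain ⟨w, hw, hangle⟩ := exists_unit_vectors_angle_mem_Icc_of_code C (by positivity)
    (by rwa [mul_div_cancel₀ _ hk'.ne']) ht (by linarith) h6t hCcos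
  exact ⟨#C, w, hw, hangle, two_pow_le_pow_sixteen_of_three_pow_le hk hcard⟩

theorem stmt_3 (d : ℕ) (hd : 2 ≤ d) (t : ℝ) (ht : 0 < t) (ht' : t < 1 / 4) :
    ∃ (m : ℕ) (w : Fin m → EuclideanSpace ℝ (Fin d)),
      (∀ i, ‖w i‖ = 1) ∧
      (∀ i j, i ≠ j →
        t ≤ InnerProductGeometry.angle (w i) (w j) ∧
        InnerProductGeometry.angle (w i) (w j) ≤ 6.5 * t) ∧
      ((2 : ℝ) ^ ((d : ℝ) / 16) ≤ (m : ℝ)) := by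
  obtain ⟨k, rfl⟩ : ∃ k, d = k + 1 := ⟨d - 1, by omega⟩
  have h6t : 6.5 * t ≤ π := by linarith [pi_gt_three]
  suffices ∃ (m : ℕ) (w : Fin m → EuclideanSpace ℝ (Fin (k + 1))), (∀ i, ‖w i‖ = 1) ∧
      (∀ i j, i ≠ j → angle (w i) (w j) ∈ Set.Icc t (6.5 * t)) ∧ 2 ^ (k + 1) ≤ m ^ 16 by
    obtain ⟨m, w, hw, hangle, hm⟩ := this
    have hm' : (2 : ℝ) ^ ((k + 1 : ℕ) / (16 : ℕ) : ℝ) ≤ m :=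
      rpow_div_le_of_pow_le_pow (by norm_num) (by positivity) (by norm_num) (by exact_mod_cast hm)
    exact ⟨m, w, hw, hangle, by exact_mod_cast hm'⟩
  rcases le_or_gt k 15 with hk | hk
  · obtain ⟨u, v, hu, hv, huv⟩ := exists_unit_vectors_angle_eq hd ht.le (by linarith)
    refine ⟨2, ![u, v], fun i => by fin_cases i <;> assumption, fun i j hij => ?_,
      Nat.pow_le_pow_right (by norm_num) (by omega)⟩
    fin_cases i <;> fin_cases j <;> simp_all [angle_comm] <;> linarith
  · exact exists_unit_vectors_angle_mem_Icc_of_nine_le (by omega) ht.le h6t
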